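/- arXiv:2101.07524 — 3 statements merged into one kernel-verified Lean document; each statement's English description precedes it below -/
import Mathlib

section
/- Let C(G) = 2·[E_{x∼P}[log D*(x)] + E_{x∼Q}[log(1−D*(x))]] where D*(x) = (p_data(x)+(β/2)p_duel(x))/(p_data(x)+p_g(x)+β·p_duel(x)), P ∝ p_data + (β/2)p_duel, Q ∝ p_g + (β/2)p_duel. Then C(G) ≥ −log 16, with equality if and only if p_data = p_g almost everywhere. -/
/-!
The optimal discriminator is `D* = P / (P + Q)`, so pointwise the integrand of the criterion is
`P log (P/(P+Q)) + Q log (Q/(P+Q)) = -(P + Q) · H(P/(P+Q))` with `H` the binary entropy.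
Since `H ≤ log 2` with equality only at `1/2`, the integrand is at least `-(P + Q) log 2`, with
equality exactly where `P = Q`, i.e. where `p_data = p_g`. Integrating, with `∫ (P + Q) = 2`,
gives `C(G) ≥ -4 log 2 = -log 16`, and equality of integrals of ordered integrands forces a.e.
equality.
-/

open MeasureTheory Real

noncomputable section

def jsIntegrand (a b : ℝ) : ℝ := a * log (a / (a + b)) + b * log (b / (a + b))

lemma jsIntegrand_eq_neg_mul_binEntropy {a b : ℝ} (h : 0 < a + b) :
    jsIntegrand a b = -((a + b) * binEntropy (a / (a + b))) := by
  have hb : 1 - a / (a + b) = b / (a + b) := by field_simp; ring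
  rw [jsIntegrand, binEntropy, hb, log_inv, log_inv]
  field_simp
  ring

lemma neg_mul_log_two_le_jsIntegrand {a b : ℝ} (ha : 0 ≤ a) (hb : 0 ≤ b) :
    -((a + b) * log 2) ≤ jsIntegrand a b := by
  rcases (add_nonneg ha hb).eq_or_lt with h | h
  · simp [jsIntegrand, ← h]
  · rw [jsIntegrand_eq_neg_mul_binEntropy h, neg_le_neg_iff]
    exact mul_le_mul_of_nonneg_left binEntropy_le_log_two h.le

lemma jsIntegrand_eq_neg_mul_log_two_iff {a b : ℝ} (ha : 0 ≤ a) (hb : 0 ≤ b) :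
    jsIntegrand a b = -((a + b) * log 2) ↔ a = b := by
  rcases (add_nonneg ha hb).eq_or_lt with h | h
  · have : a = 0 ∧ b = 0 := ⟨by linarith, by linarith⟩
    simp [jsIntegrand, this.1, this.2]
  · rw [jsIntegrand_eq_neg_mul_binEntropy h, neg_inj, mul_right_inj' h.ne', binEntropy_eq_log_two,
      div_eq_iff h.ne']
    constructor <;> intro <;> linarith

/-- The junk value `log 0 = 0` makes this hold even where `a + b = 0`. -/
lemma mul_log_div_add_mul_log_one_sub_div (a b : ℝ) :
    a * log (a / (a + b)) + b * log (1 - a / (a + b)) = jsIntegrand a b := by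
  rcases eq_or_ne (a + b) 0 with h | h
  · simp [jsIntegrand, h]
  · rw [jsIntegrand, one_sub_div h, add_sub_cancel_left]

section Integral

variable {X : Type*} [MeasurableSpace X] {μ : Measure X} {f g : X → ℝ}

lemma neg_mul_log_two_le_integral_jsIntegrand_and_eq_iff (hf : ∀ x, 0 ≤ f x)
    (hg : ∀ x, 0 ≤ g x) (hfg : Integrable (fun x => f x + g x) μ)
    (hjs : Integrable (fun x => jsIntegrand (f x) (g x)) μ) :
    -((∫ x, f x + g x ∂μ) * log 2) ≤ ∫ x, jsIntegrand (f x) (g x) ∂μ ∧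
      (∫ x, jsIntegrand (f x) (g x) ∂μ = -((∫ x, f x + g x ∂μ) * log 2) ↔ f =ᵐ[μ] g) := by
  have hle : (fun x => -((f x + g x) * log 2)) ≤ᵐ[μ] fun x => jsIntegrand (f x) (g x) :=
    ae_of_all _ fun x => neg_mul_log_two_le_jsIntegrand (hf x) (hg x)
  have hlow : Integrable (fun x => -((f x + g x) * log 2)) μ := (hfg.mul_const _).neg
  rw [← integral_mul_const, ← integral_neg, eq_comm, integral_eq_iff_of_ae_le hlow hjs hle]
  refine ⟨integral_mono_ae hlow hjs hle, Filter.eventually_congr (ae_of_all _ fun x => ?_)⟩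
  rw [eq_comm]
  exact jsIntegrand_eq_neg_mul_log_two_iff (hf x) (hg x)

end Integral

/-- `duelMix β a b` is the normalized mixture `(a + (β/2) p_duel) / (1 + β/2)` with
`p_duel = (a + b)/2`; thus `P = duelMix β p_data p_g` and `Q = duelMix β p_g p_data`. -/
def duelMix (β a b : ℝ) : ℝ := (a + β / 2 * ((a + b) / 2)) / (1 + β / 2)

section DuelMix

variable {β : ℝ}

lemma duelMix_nonneg (hβ : 0 ≤ β) {a b : ℝ} (ha : 0 ≤ a) (hb : 0 ≤ b) : 0 ≤ duelMix β a b := by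
  unfold duelMix; positivity

lemma duelMix_add_duelMix (hβ : 1 + β / 2 ≠ 0) (a b : ℝ) :
    duelMix β a b + duelMix β b a = a + b := by
  rw [duelMix, duelMix, ← add_div, div_eq_iff hβ]
  ring

lemma duelMix_eq_duelMix_iff (hβ : 1 + β / 2 ≠ 0) {a b : ℝ} :
    duelMix β a b = duelMix β b a ↔ a = b := by
  unfold duelMix
  rw [div_left_inj' hβ]
  constructor <;> intro <;> linarith

lemma duelDiscriminator_eq_duelMix_div (hβ : 1 + β / 2 ≠ 0) (a b : ℝ) :
    (a + β / 2 * ((a + b) / 2)) / (a + b + β * ((a + b) / 2)) =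
      duelMix β a b / (duelMix β a b + duelMix β b a) := by
  rw [duelMix_add_duelMix hβ, duelMix, div_div]
  congr 1
  ring

end DuelMix

end

theorem duelgan_global_minimum_general
    {X : Type*} [MeasurableSpace X] (μ : Measure X)
    (pdata pg : X → ℝ) (β : ℝ) (hβ : β ∈ Set.Icc (0:ℝ) 1)
    (hp0 : ∀ x, 0 ≤ pdata x) (hq0 : ∀ x, 0 ≤ pg x)
    (hpI : ∫ x, pdata x ∂μ = 1) (hqI : ∫ x, pg x ∂μ = 1)
    (pduel P Q Dstar : X → ℝ)
    (hpduel : ∀ x, pduel x = (pdata x + pg x) / 2)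
    (hP : ∀ x, P x = (pdata x + β / 2 * pduel x) / (1 + β / 2))
    (hQ : ∀ x, Q x = (pg x + β / 2 * pduel x) / (1 + β / 2))
    (hD : ∀ x, Dstar x =
      (pdata x + β / 2 * pduel x) / (pdata x + pg x + β * pduel x))
    (hInt1 : Integrable (fun x => P x * Real.log (Dstar x)) μ)
    (hInt2 : Integrable (fun x => Q x * Real.log (1 - Dstar x)) μ) :
    -Real.log 16 ≤
      2 * ((∫ x, P x * Real.log (Dstar x) ∂μ) + ∫ x, Q x * Real.log (1 - Dstar x) ∂μ) ∧
    (2 * ((∫ x, P x * Real.log (Dstar x) ∂μ) + ∫ x, Q x * Real.log (1 - Dstar x) ∂μ)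
        = -Real.log 16 ↔ pdata =ᵐ[μ] pg) := by
  have hβ' : 1 + β / 2 ≠ 0 := by linarith [hβ.1]
  have hPx (x : X) : P x = duelMix β (pdata x) (pg x) := by rw [hP, hpduel, duelMix]
  have hQx (x : X) : Q x = duelMix β (pg x) (pdata x) := by
    rw [hQ, hpduel, duelMix, add_comm (pdata x)]
  have hP0 (x : X) : 0 ≤ P x := hPx x ▸ duelMix_nonneg hβ.1 (hp0 x) (hq0 x)
  have hQ0 (x : X) : 0 ≤ Q x := hQx x ▸ duelMix_nonneg hβ.1 (hq0 x) (hp0 x)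
  have hPQ (x : X) : P x + Q x = pdata x + pg x := by rw [hPx, hQx, duelMix_add_duelMix hβ']
  have hintegrand (x : X) :
      P x * log (Dstar x) + Q x * log (1 - Dstar x) = jsIntegrand (P x) (Q x) := by
    rw [hD, hpduel, hPx, hQx, duelDiscriminator_eq_duelMix_div hβ',
      mul_log_div_add_mul_log_one_sub_div]
  have hsplit : (∫ x, P x * log (Dstar x) ∂μ) + ∫ x, Q x * log (1 - Dstar x) ∂μ =
      ∫ x, jsIntegrand (P x) (Q x) ∂μ := by
    rw [← integral_add hInt1 hInt2]
    exact integral_congr_ae (ae_of_all _ hintegrand)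
  have hjs : Integrable (fun x => jsIntegrand (P x) (Q x)) μ :=
    (hInt1.add hInt2).congr (ae_of_all _ hintegrand)
  have hpint : Integrable pdata μ := .of_integral_ne_zero (by simp [hpI])
  have hqint : Integrable pg μ := .of_integral_ne_zero (by simp [hqI])
  have hPQint : Integrable (fun x => P x + Q x) μ :=
    (hpint.add hqint).congr (ae_of_all _ fun x => (hPQ x).symm)
  have hmass : ∫ x, P x + Q x ∂μ = 2 := by
    simp only [hPQ]
    rw [integral_add hpint hqint, hpI, hqI]
    norm_num
  have hlog16 : log 16 = 4 * log 2 := by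
    rw [show (16 : ℝ) = 2 ^ 4 by norm_num, log_pow]; norm_num
  have hae : P =ᵐ[μ] Q ↔ pdata =ᵐ[μ] pg := Filter.eventually_congr (ae_of_all _ fun x => by
    rw [hPx, hQx]; exact duelMix_eq_duelMix_iff hβ')
  obtain ⟨hbound, heq⟩ := neg_mul_log_two_le_integral_jsIntegrand_and_eq_iff hP0 hQ0 hPQint hjs
  rw [hmass] at hbound heq
  rw [hsplit, hlog16, ← hae, ← heq]
  exact ⟨by linarith, by constructor <;> intro <;> linarith⟩

/-- Theorem 1 (DuelGAN). With `p_duel = (p_data+p_g)/2`,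
`D*(x) = (p_data(x)+(β/2)p_duel(x))/(p_data(x)+p_g(x)+β·p_duel(x))`,
`P ∝ p_data + (β/2)p_duel` and `Q ∝ p_g + (β/2)p_duel` (normalized by `1+β/2`),
the criterion `C(G) = 2·[E_{x∼P}[log D*(x)] + E_{x∼Q}[log(1-D*(x))]]` satisfies
`C(G) ≥ -log 16`, with equality iff `p_data = p_g` almost everywhere. -/
theorem duelgan_global_minimum
    {X : Type*} [MeasurableSpace X] (μ : Measure X)
    (pdata pg : X → ℝ) (β : ℝ) (hβ : β ∈ Set.Icc (0:ℝ) 1)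
    (hpm : Measurable pdata) (hqm : Measurable pg)
    (hp0 : ∀ x, 0 ≤ pdata x) (hq0 : ∀ x, 0 ≤ pg x)
    (hpI : ∫ x, pdata x ∂μ = 1) (hqI : ∫ x, pg x ∂μ = 1)
    (pduel P Q Dstar : X → ℝ)
    (hpduel : ∀ x, pduel x = (pdata x + pg x) / 2)
    (hP : ∀ x, P x = (pdata x + β / 2 * pduel x) / (1 + β / 2))
    (hQ : ∀ x, Q x = (pg x + β / 2 * pduel x) / (1 + β / 2))
    (hD : ∀ x, Dstar x =
      (pdata x + β / 2 * pduel x) / (pdata x + pg x + β * pduel x))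
    (hInt1 : Integrable (fun x => P x * Real.log (Dstar x)) μ)
    (hInt2 : Integrable (fun x => Q x * Real.log (1 - Dstar x)) μ) :
    -Real.log 16 ≤
      2 * ((∫ x, P x * Real.log (Dstar x) ∂μ) + ∫ x, Q x * Real.log (1 - Dstar x) ∂μ) ∧
    (2 * ((∫ x, P x * Real.log (Dstar x) ∂μ) + ∫ x, Q x * Real.log (1 - Dstar x) ∂μ)
        = -Real.log 16 ↔ pdata =ᵐ[μ] pg) :=
  duelgan_global_minimum_general μ pdata pg β hβ hp0 hq0 hpI hqI pduel P Q Dstar hpduel hP hQ hD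
    hInt1 hInt2
end

section
/- Let Duel(D)|_Y := E_x[ℓ(D(x), Y(x))] − α·E_{x₁}E_{x₂}[ℓ(D(x₁), Y(x₂))] with x, x₁, x₂ i.i.d. from p_duel, where Y(x) ∈ {0,1}. If Ỹ is a noisy version of Y* with flip rates e_data = P(Ỹ=0|Y*=1), e_g = P(Ỹ=1|Y*=0), then Duel(D)|_Ỹ = (1 − e_data − e_g)·Duel(D)|_{Y*} + (1−α)·E_{x∼p_duel}[e_data·ℓ(D(x),0) + e_g·ℓ(D(x),1)]. -/
open MeasureTheory Real

/-- The duel term `Duel(D)|_Y = E_x[ℓ(D(x),Y(x))] - α·E_{x₁}E_{x₂}[ℓ(D(x₁),Y(x₂))]`,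
where `x, x₁, x₂` are i.i.d. from `μ = p_duel`, `ℓ(d,1) = log d`, `ℓ(d,0) = log(1-d)`,
and `t x` is the (conditional) probability that the label of `x` equals `1`. -/
noncomputable def duelVal {X : Type*} [MeasurableSpace X] (μ : Measure X)
    (D : X → ℝ) (α : ℝ) (t : X → ℝ) : ℝ :=
  (∫ x, (t x * Real.log (D x) + (1 - t x) * Real.log (1 - D x)) ∂μ) -
  α * ∫ x₁, ∫ x₂,
    (t x₂ * Real.log (D x₁) + (1 - t x₂) * Real.log (1 - D x₁)) ∂μ ∂μ

/-!
The expected loss `t·log D + (1-t)·log(1-D)` is affine in the label probability `t`, and so is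
the duel term; the noisy label probability `(1-e_data)·t + e_g·(1-t)` is the affine image
`(1-e_data-e_g)·t + e_g` of the clean one. The constant part `e_g` enters the self term with
weight `1` and the cross term with weight `α`, which produces the factor `1-α`.
-/

section

variable {X : Type*} [MeasurableSpace X] {μ : Measure X} {D t : X → ℝ}

lemma integrable_mul_log_add_one_sub_mul_log (htm : AEStronglyMeasurable t μ)
    (ht : ∀ x, t x ∈ Set.Icc (0 : ℝ) 1)
    (hlog : Integrable (fun x => log (D x)) μ) (hlog' : Integrable (fun x => log (1 - D x)) μ) :
    Integrable (fun x => t x * log (D x) + (1 - t x) * log (1 - D x)) μ := by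
  have hbound : ∀ x, ‖t x‖ ≤ 1 := fun x => by
    rw [Real.norm_of_nonneg (ht x).1]; exact (ht x).2
  have hbound' : ∀ x, ‖1 - t x‖ ≤ 1 := fun x => by
    rw [Real.norm_of_nonneg (sub_nonneg.2 (ht x).2)]; linarith [(ht x).1]
  exact (hlog.bdd_mul htm (.of_forall hbound)).add
    (hlog'.bdd_mul (aestronglyMeasurable_const.sub htm) (.of_forall hbound'))

lemma duelVal_eq_integral_sub [IsProbabilityMeasure μ] (α : ℝ) (ht : Integrable t μ) :
    duelVal μ D α t = ∫ x, (t x * log (D x) + (1 - t x) * log (1 - D x)) ∂μ -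
      α * ∫ x, ((∫ y, t y ∂μ) * log (D x) + (1 - ∫ y, t y ∂μ) * log (1 - D x)) ∂μ := by
  have hinner (a b : ℝ) :
      ∫ y, (t y * a + (1 - t y) * b) ∂μ = (∫ y, t y ∂μ) * a + (1 - ∫ y, t y ∂μ) * b := by
    have hcompl : Integrable (fun y => 1 - t y) μ := (integrable_const 1).sub ht
    rw [integral_add (ht.mul_const a) (hcompl.mul_const b),
      integral_mul_const, integral_mul_const, integral_sub (integrable_const 1) ht,
      integral_const, probReal_univ, one_smul]
  simp only [duelVal, hinner]

lemma integral_affine_mul_log_add {p : X → ℝ} (c b : ℝ)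
    (hp : Integrable (fun x => p x * log (D x) + (1 - p x) * log (1 - D x)) μ)
    (hlog : Integrable (fun x => log (D x)) μ) (hlog' : Integrable (fun x => log (1 - D x)) μ) :
    ∫ x, ((c * p x + b) * log (D x) + (1 - (c * p x + b)) * log (1 - D x)) ∂μ =
      c * ∫ x, (p x * log (D x) + (1 - p x) * log (1 - D x)) ∂μ +
        ∫ x, (b * log (D x) + (1 - c - b) * log (1 - D x)) ∂μ := by
  have hconst : Integrable (fun x => b * log (D x) + (1 - c - b) * log (1 - D x)) μ :=
    (hlog.const_mul b).add (hlog'.const_mul _)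
  rw [← integral_const_mul, ← integral_add (hp.const_mul c) hconst]
  exact integral_congr_ae (.of_forall fun x => by ring)

lemma duelVal_affine [IsProbabilityMeasure μ] (α c b : ℝ) (ht : Integrable t μ)
    (htlog : Integrable (fun x => t x * log (D x) + (1 - t x) * log (1 - D x)) μ)
    (hlog : Integrable (fun x => log (D x)) μ) (hlog' : Integrable (fun x => log (1 - D x)) μ) :
    duelVal μ D α (fun x => c * t x + b) = c * duelVal μ D α t +
      (1 - α) * ∫ x, (b * log (D x) + (1 - c - b) * log (1 - D x)) ∂μ := by
  have hmean : ∫ x, (c * t x + b) ∂μ = c * ∫ x, t x ∂μ + b := by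
    rw [integral_add (ht.const_mul c) (integrable_const b), integral_const_mul, integral_const,
      probReal_univ, one_smul]
  have hmeanlog : Integrable (fun x => (∫ y, t y ∂μ) * log (D x) +
      (1 - ∫ y, t y ∂μ) * log (1 - D x)) μ :=
    (hlog.const_mul _).add (hlog'.const_mul _)
  have haffine : Integrable (fun x => c * t x + b) μ := (ht.const_mul c).add (integrable_const b)
  rw [duelVal_eq_integral_sub α haffine,
    duelVal_eq_integral_sub α ht, hmean, integral_affine_mul_log_add c b htlog hlog hlog',
    integral_affine_mul_log_add (p := fun _ => ∫ y, t y ∂μ) c b hmeanlog hlog hlog']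
  ring

end

theorem duel_noisy_decomposition_general
    {X : Type*} [MeasurableSpace X] (μ : Measure X) [IsProbabilityMeasure μ]
    (D : X → ℝ) (α : ℝ)
    (tstar : X → ℝ) (htm : Measurable tstar)
    (ht01 : ∀ x, tstar x = 0 ∨ tstar x = 1)
    (edata eg : ℝ)
    (hInt1 : Integrable (fun x => Real.log (D x)) μ)
    (hInt2 : Integrable (fun x => Real.log (1 - D x)) μ) :
    duelVal μ D α (fun x => (1 - edata) * tstar x + eg * (1 - tstar x))
      = (1 - edata - eg) * duelVal μ D α tstar +
        (1 - α) * ∫ x, (edata * Real.log (1 - D x) + eg * Real.log (D x)) ∂μ := by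
  have hIcc : ∀ x, tstar x ∈ Set.Icc (0 : ℝ) 1 := fun x => by
    rcases ht01 x with h | h <;> simp [h]
  have htint : Integrable tstar μ :=
    (integrable_const (1 : ℝ)).mono' htm.aestronglyMeasurable
      (.of_forall fun x => abs_le.2 ⟨by linarith [(hIcc x).1], (hIcc x).2⟩)
  have hnoisy : (fun x => (1 - edata) * tstar x + eg * (1 - tstar x)) =
      fun x => (1 - edata - eg) * tstar x + eg := by
    funext x; ring
  rw [hnoisy, duelVal_affine α _ _ htint
    (integrable_mul_log_add_one_sub_mul_log htm.aestronglyMeasurable hIcc hInt1 hInt2) hInt1 hInt2]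
  refine congrArg (_ + (1 - α) * ·) (integral_congr_ae (.of_forall fun x => ?_))
  ring

/-- Key decomposition in the proof of DuelGAN's Theorem 2: if `Ỹ` is a noisy version of
`Y*` with flip rates `e_data = P(Ỹ=0|Y*=1)` and `e_g = P(Ỹ=1|Y*=0)`, then
`Duel(D)|_Ỹ = (1-e_data-e_g)·Duel(D)|_{Y*}
  + (1-α)·E_{x∼p_duel}[e_data·ℓ(D(x),0) + e_g·ℓ(D(x),1)]`. -/
theorem duel_noisy_decomposition
    {X : Type*} [MeasurableSpace X] (μ : Measure X) [IsProbabilityMeasure μ]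
    (D : X → ℝ) (α : ℝ) (hα : α ∈ Set.Icc (0:ℝ) 1)
    (tstar : X → ℝ) (htm : Measurable tstar)
    (ht01 : ∀ x, tstar x = 0 ∨ tstar x = 1)
    (edata eg : ℝ)
    (hInt1 : Integrable (fun x => Real.log (D x)) μ)
    (hInt2 : Integrable (fun x => Real.log (1 - D x)) μ) :
    duelVal μ D α (fun x => (1 - edata) * tstar x + eg * (1 - tstar x))
      = (1 - edata - eg) * duelVal μ D α tstar +
        (1 - α) * ∫ x, (edata * Real.log (1 - D x) + eg * Real.log (D x)) ∂μ :=
  duel_noisy_decomposition_general μ D α tstar htm ht01 edata eg hInt1 hInt2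
end

section
/- With the setup of the duel-term decomposition, if α = 1 and e_data + e_g < 1, then Duel(D)|_Ỹ = (1 − e_data − e_g)·Duel(D)|_{Y*} with a strictly positive constant factor, and hence argmax_D Duel(D)|_Ỹ = argmax_D Duel(D)|_{Y*}. -/
open MeasureTheory Real

lemma duel_eval {X : Type*} [MeasurableSpace X] (μ : Measure X) [IsProbabilityMeasure μ]
    (D t : X → ℝ) (ht : Integrable t μ)
    (h1 : Integrable (fun x => Real.log (D x)) μ)
    (h2 : Integrable (fun x => Real.log (1 - D x)) μ)
    (hA : Integrable (fun x => t x * Real.log (D x)) μ)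
    (hB : Integrable (fun x => t x * Real.log (1 - D x)) μ) :
    duelVal μ D 1 t =
      (∫ x, t x * Real.log (D x) ∂μ) - (∫ x, t x * Real.log (1 - D x) ∂μ)
      - (∫ x, t x ∂μ) * (∫ x, Real.log (D x) ∂μ)
      + (∫ x, t x ∂μ) * (∫ x, Real.log (1 - D x) ∂μ) := by
  have hone : Integrable (fun _ : X => (1 : ℝ)) μ := integrable_const 1
  have h1t : Integrable (fun x => 1 - t x) μ := hone.sub ht
  have hin : ∀ x₁, (∫ x₂, (t x₂ * Real.log (D x₁) + (1 - t x₂) * Real.log (1 - D x₁)) ∂μ)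
      = (∫ x, t x ∂μ) * Real.log (D x₁) + (1 - ∫ x, t x ∂μ) * Real.log (1 - D x₁) := by
    intro x₁
    rw [integral_add (ht.mul_const _) (h1t.mul_const _), integral_mul_const,
      integral_mul_const, integral_sub hone ht, integral_const]
    simp
  have hfirst : (∫ x, (t x * Real.log (D x) + (1 - t x) * Real.log (1 - D x)) ∂μ)
      = (∫ x, t x * Real.log (D x) ∂μ) + ((∫ x, Real.log (1 - D x) ∂μ)
        - ∫ x, t x * Real.log (1 - D x) ∂μ) := by
    have : (fun x => t x * Real.log (D x) + (1 - t x) * Real.log (1 - D x))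
        = fun x => t x * Real.log (D x) + (Real.log (1 - D x) - t x * Real.log (1 - D x)) := by
      funext x; ring
    have hsub : Integrable (fun x => Real.log (1 - D x) - t x * Real.log (1 - D x)) μ :=
      h2.sub hB
    rw [this, integral_add hA hsub, integral_sub h2 hB]
  unfold duelVal
  rw [hfirst]
  simp only [hin]
  rw [integral_add ((h1.const_mul _)) ((h2.const_mul _)), integral_const_mul,
    integral_const_mul]
  ring

/-- Theorem 2 (DuelGAN): if `α = 1` and `e_data + e_g < 1`, then
`Duel(D)|_Ỹ = (1-e_data-e_g)·Duel(D)|_{Y*}` with a strictly positive factor, and hence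
the maximizers of the duel term over any class `S` of discriminators coincide for the
noisy labels `Ỹ` and the optimal labels `Y*`. -/
theorem duel_stability
    {X : Type*} [MeasurableSpace X] (μ : Measure X) [IsProbabilityMeasure μ]
    (tstar : X → ℝ) (htm : Measurable tstar)
    (ht01 : ∀ x, tstar x = 0 ∨ tstar x = 1)
    (edata eg : ℝ) (hed : 0 ≤ edata) (heg : 0 ≤ eg)
    (hsum : edata + eg < 1)
    (S : Set (X → ℝ))
    (hInt : ∀ D ∈ S, Integrable (fun x => Real.log (D x)) μ ∧
      Integrable (fun x => Real.log (1 - D x)) μ) :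
    0 < 1 - edata - eg ∧
    (∀ D ∈ S, duelVal μ D 1 (fun x => (1 - edata) * tstar x + eg * (1 - tstar x))
        = (1 - edata - eg) * duelVal μ D 1 tstar) ∧
    (∀ D₀ ∈ S,
      (IsMaxOn (fun D : X → ℝ =>
          duelVal μ D 1 (fun x => (1 - edata) * tstar x + eg * (1 - tstar x))) S D₀
        ↔ IsMaxOn (fun D : X → ℝ => duelVal μ D 1 tstar) S D₀)) := by
  set k : ℝ := 1 - edata - eg with hk
  have hkpos : 0 < k := by simp [hk]; linarith
  -- basic integrability of tstar
  have htb : ∀ x, ‖tstar x‖ ≤ 1 := by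
    intro x; rcases ht01 x with h | h <;> simp [h]
  have ht : Integrable tstar μ :=
    Integrable.mono' (integrable_const 1) htm.aestronglyMeasurable
      (Filter.Eventually.of_forall htb)
  -- the noisy label function is an affine transform
  have hte : (fun x => (1 - edata) * tstar x + eg * (1 - tstar x))
      = fun x => eg + k * tstar x := by
    funext x; simp [hk]; ring
  have key : ∀ D ∈ S, duelVal μ D 1 (fun x => (1 - edata) * tstar x + eg * (1 - tstar x))
      = k * duelVal μ D 1 tstar := by
    intro D hD
    obtain ⟨h1, h2⟩ := hInt D hD
    have hA : Integrable (fun x => tstar x * Real.log (D x)) μ := by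
      refine Integrable.mono' h1.norm
        (htm.aestronglyMeasurable.mul h1.aestronglyMeasurable)
        (Filter.Eventually.of_forall fun x => ?_)
      calc ‖tstar x * Real.log (D x)‖ = ‖tstar x‖ * ‖Real.log (D x)‖ := norm_mul _ _
        _ ≤ 1 * ‖Real.log (D x)‖ := by
            exact mul_le_mul_of_nonneg_right (htb x) (norm_nonneg _)
        _ = ‖Real.log (D x)‖ := one_mul _
    have hB : Integrable (fun x => tstar x * Real.log (1 - D x)) μ := by
      refine Integrable.mono' h2.norm
        (htm.aestronglyMeasurable.mul h2.aestronglyMeasurable)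
        (Filter.Eventually.of_forall fun x => ?_)
      calc ‖tstar x * Real.log (1 - D x)‖ = ‖tstar x‖ * ‖Real.log (1 - D x)‖ := norm_mul _ _
        _ ≤ 1 * ‖Real.log (1 - D x)‖ := by
            exact mul_le_mul_of_nonneg_right (htb x) (norm_nonneg _)
        _ = ‖Real.log (1 - D x)‖ := one_mul _
    -- integrability of noisy-label products
    have ht' : Integrable (fun x => eg + k * tstar x) μ :=
      (integrable_const eg).add (ht.const_mul k)
    have hA'eq : (fun x => (eg + k * tstar x) * Real.log (D x))
        = fun x => eg * Real.log (D x) + k * (tstar x * Real.log (D x)) := by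
      funext x; ring
    have hB'eq : (fun x => (eg + k * tstar x) * Real.log (1 - D x))
        = fun x => eg * Real.log (1 - D x) + k * (tstar x * Real.log (1 - D x)) := by
      funext x; ring
    have hA' : Integrable (fun x => (eg + k * tstar x) * Real.log (D x)) μ := by
      rw [hA'eq]; exact (h1.const_mul eg).add (hA.const_mul k)
    have hB' : Integrable (fun x => (eg + k * tstar x) * Real.log (1 - D x)) μ := by
      rw [hB'eq]; exact (h2.const_mul eg).add (hB.const_mul k)
    rw [hte, duel_eval μ D _ ht' h1 h2 hA' hB', duel_eval μ D tstar ht h1 h2 hA hB]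
    -- compute the noisy integrals
    have e1 : (∫ x, (eg + k * tstar x) * Real.log (D x) ∂μ)
        = eg * (∫ x, Real.log (D x) ∂μ) + k * ∫ x, tstar x * Real.log (D x) ∂μ := by
      rw [hA'eq, integral_add (h1.const_mul eg) (hA.const_mul k),
        integral_const_mul, integral_const_mul]
    have e2 : (∫ x, (eg + k * tstar x) * Real.log (1 - D x) ∂μ)
        = eg * (∫ x, Real.log (1 - D x) ∂μ) + k * ∫ x, tstar x * Real.log (1 - D x) ∂μ := by
      rw [hB'eq, integral_add (h2.const_mul eg) (hB.const_mul k),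
        integral_const_mul, integral_const_mul]
    have e3 : (∫ x, (eg + k * tstar x) ∂μ) = eg + k * ∫ x, tstar x ∂μ := by
      rw [integral_add (integrable_const eg) (ht.const_mul k), integral_const,
        integral_const_mul]
      simp
    rw [e1, e2, e3]
    ring
  refine ⟨hkpos, key, fun D₀ hD₀ => ?_⟩
  rw [isMaxOn_iff, isMaxOn_iff]
  constructor
  · intro h D hD
    have := h D hD
    rw [key D hD, key D₀ hD₀] at this
    exact le_of_mul_le_mul_left this hkpos
  · intro h D hD
    rw [key D hD, key D₀ hD₀]
    exact mul_le_mul_of_nonneg_left (h D hD) hkpos.le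
end
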